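/- Integrated form of the eigenvalue equation: in the operator setting described in the context, assume τ₀ > 1, τ₁ > 2 and τ₂ > 2, let u be a solution of Pu = 0 as described in the context, and assume moreover that ∫_r^∞ e^{−2t} ‖Q u(t)‖_H dt < ∞ for every r > R₀. Then for every r > R₀ the functions t ↦ e^{−2t}Q(t)u(t), t ↦ V₁(t)u'(t) and t ↦ V₂(t)u(t) are Bochner integrable on (r,∞) and −u'(r) = ∫_r^∞ e^{−2t} Q(t) u(t) dt + ∫_r^∞ V₁(t) u'(t) dt + ∫_r^∞ V₂(t) u(t) dt. -/

import Mathlib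

open MeasureTheory Set Real Filter

/-- The abstract operator setting of Bouclet's paper: a dense subspace `D` of a Hilbert
space `H`, a symmetric coercive operator `A : D → D` (playing the role of `Q^{1/2}`, with
`Q := A ∘ A = A^2`), families of operators `Q(r), V₁(r), V₂(r)` (with derivatives in `r`
denoted `Q'(r), Q''(r), V₁'(r)`) defined for `r > R₀`, satisfying the smoothness
assumptions and the decay assumptions (A0), (A1), (A2) with exponents `τ₀, τ₁, τ₂ > 0`. -/
structure OpSetting (H : Type*) [NormedAddCommGroup H] [InnerProductSpace ℂ H]
    [CompleteSpace H] (R₀ : ℝ) where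
  /-- the dense subspace `D ⊆ H` -/
  D : Submodule ℂ H
  denseD : Dense (D : Set H)
  /-- `A` plays the role of `Q^{1/2}` -/
  A : D →ₗ[ℂ] D
  A_symm : ∀ φ ψ : D, (inner ℂ ((A φ : H)) ((ψ : H)) : ℂ) = inner ℂ ((φ : H)) ((A ψ : H))
  A_coercive : ∀ φ : D, ‖(φ : H)‖ ^ 2 ≤ (inner ℂ ((A φ : H)) ((φ : H)) : ℂ).re
  /-- the family `Q(r)` -/
  Qr : ℝ → D →ₗ[ℂ] D
  /-- the derivative `Q'(r)` -/
  Qr' : ℝ → D →ₗ[ℂ] D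
  /-- the second derivative `Q''(r)` -/
  Qr'' : ℝ → D →ₗ[ℂ] D
  /-- the family `V₁(r)` -/
  V₁ : ℝ → D →ₗ[ℂ] D
  /-- the derivative `V₁'(r)` -/
  V₁' : ℝ → D →ₗ[ℂ] D
  /-- the family `V₂(r)` -/
  V₂ : ℝ → D →ₗ[ℂ] D
  τ₀ : ℝ
  τ₁ : ℝ
  τ₂ : ℝ
  τ₀_pos : 0 < τ₀
  τ₁_pos : 0 < τ₁
  τ₂_pos : 0 < τ₂
  -- smoothness in `r` of the operator families, tested against all powers of `A`
  Qr_hasDeriv : ∀ (m : ℕ) (φ : D), ∀ r ∈ Set.Ioi R₀,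
    HasDerivAt (fun t : ℝ => (((A ^ m) (Qr t φ)) : H)) (((A ^ m) (Qr' r φ)) : H) r
  Qr'_hasDeriv : ∀ (m : ℕ) (φ : D), ∀ r ∈ Set.Ioi R₀,
    HasDerivAt (fun t : ℝ => (((A ^ m) (Qr' t φ)) : H)) (((A ^ m) (Qr'' r φ)) : H) r
  Qr''_cont : ∀ (m : ℕ) (φ : D),
    ContinuousOn (fun r : ℝ => (((A ^ m) (Qr'' r φ)) : H)) (Set.Ioi R₀)
  V₁_hasDeriv : ∀ (m : ℕ) (φ : D), ∀ r ∈ Set.Ioi R₀,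
    HasDerivAt (fun t : ℝ => (((A ^ m) (V₁ t φ)) : H)) (((A ^ m) (V₁' r φ)) : H) r
  V₁'_cont : ∀ (m : ℕ) (φ : D),
    ContinuousOn (fun r : ℝ => (((A ^ m) (V₁' r φ)) : H)) (Set.Ioi R₀)
  V₂_cont : ∀ (m : ℕ) (φ : D),
    ContinuousOn (fun r : ℝ => (((A ^ m) (V₂ r φ)) : H)) (Set.Ioi R₀)
  -- assumption (A0): graded bounds on `Q⁽ʲ⁾(r)` for `j = 0,1,2`
  A0_graded : ∀ m : ℕ, ∃ Cm : ℝ, ∀ r ∈ Set.Ioi R₀, ∀ φ : D,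
    ‖(((A ^ m) ((Qr r - A ^ 2) φ)) : H)‖ ≤ Cm * r ^ (-τ₀) * ‖(((A ^ (m + 2)) φ) : H)‖ ∧
    ‖(((A ^ m) (Qr' r φ)) : H)‖ ≤ Cm * r ^ (-(τ₀ + 1)) * ‖(((A ^ (m + 2)) φ) : H)‖ ∧
    ‖(((A ^ m) (Qr'' r φ)) : H)‖ ≤ Cm * r ^ (-(τ₀ + 2)) * ‖(((A ^ (m + 2)) φ) : H)‖
  -- assumption (A0): form bounds (case `s = -1/2`)
  A0_form : ∃ C : ℝ, ∀ r ∈ Set.Ioi R₀, ∀ φ ψ : D,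
    ‖(inner ℂ ((((Qr r - A ^ 2) φ) : H)) ((ψ : H)) : ℂ)‖ ≤
      C * r ^ (-τ₀) * ‖(A φ : H)‖ * ‖(A ψ : H)‖ ∧
    ‖(inner ℂ (((Qr' r φ) : H)) ((ψ : H)) : ℂ)‖ ≤
      C * r ^ (-(τ₀ + 1)) * ‖(A φ : H)‖ * ‖(A ψ : H)‖ ∧
    ‖(inner ℂ (((Qr'' r φ) : H)) ((ψ : H)) : ℂ)‖ ≤
      C * r ^ (-(τ₀ + 2)) * ‖(A φ : H)‖ * ‖(A ψ : H)‖
  -- assumption (A1): `H → H` bounds on `V₁⁽ʲ⁾(r)` for `j = 0,1`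
  A1_bound : ∃ C : ℝ, ∀ r ∈ Set.Ioi R₀, ∀ φ : D,
    ‖((V₁ r φ) : H)‖ ≤ C * r ^ (-τ₁) * ‖(φ : H)‖ ∧
    ‖((V₁' r φ) : H)‖ ≤ C * r ^ (-(τ₁ + 1)) * ‖(φ : H)‖
  -- assumption (A1): graded bounds
  A1_graded : ∀ k : ℕ, ∃ Ck : ℝ, ∀ r ∈ Set.Ioi R₀, ∀ φ : D,
    ‖(((A ^ (2 * k)) (V₁ r φ)) : H)‖ ≤ Ck * r ^ (-τ₁) * ‖(((A ^ (2 * k)) φ) : H)‖ ∧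
    ‖(((A ^ (2 * k)) (V₁' r φ)) : H)‖ ≤ Ck * r ^ (-(τ₁ + 1)) * ‖(((A ^ (2 * k)) φ) : H)‖
  -- assumption (A2): `H → H` bound on `V₂(r)`
  A2_bound : ∃ C : ℝ, ∀ r ∈ Set.Ioi R₀, ∀ φ : D,
    ‖((V₂ r φ) : H)‖ ≤ C * r ^ (-τ₂) * ‖(φ : H)‖
  -- assumption (A2): graded bounds
  A2_graded : ∀ k : ℕ, ∃ Ck : ℝ, ∀ r ∈ Set.Ioi R₀, ∀ φ : D,
    ‖(((A ^ (2 * k)) (V₂ r φ)) : H)‖ ≤ Ck * r ^ (-τ₂) * ‖(((A ^ (2 * k)) φ) : H)‖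

/-- `u` is a solution of `Pu = 0` in the sense of Bouclet's paper: `r ↦ A^m u(r)` is `C¹`
with derivative `A^m u'(r)` for all `m`; as an `H`-valued function `u` is `C²` with second
derivative `u''`; `u` and `u''` are in `L²H`; `∫ e^{-4r}‖Q u(r)‖² dr < ∞`; and
`u'' = V₁(r)u' + V₂(r)u + e^{-2r} Q(r) u` on `(R₀,∞)`. -/
structure IsSolution {H : Type*} [NormedAddCommGroup H] [InnerProductSpace ℂ H]
    [CompleteSpace H] {R₀ : ℝ} (S : OpSetting H R₀)
    (u u' : ℝ → S.D) (u'' : ℝ → H) : Prop where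
  u_hasDeriv : ∀ (m : ℕ), ∀ r ∈ Set.Ioi R₀,
    HasDerivAt (fun t : ℝ => (((S.A ^ m) (u t)) : H)) (((S.A ^ m) (u' r)) : H) r
  u'_cont : ∀ m : ℕ, ContinuousOn (fun r : ℝ => (((S.A ^ m) (u' r)) : H)) (Set.Ioi R₀)
  u'_hasDeriv : ∀ r ∈ Set.Ioi R₀, HasDerivAt (fun t : ℝ => ((u' t) : H)) (u'' r) r
  u''_cont : ContinuousOn u'' (Set.Ioi R₀)
  u_L2 : IntegrableOn (fun r : ℝ => ‖((u r) : H)‖ ^ 2) (Set.Ioi R₀)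
  u''_L2 : IntegrableOn (fun r : ℝ => ‖u'' r‖ ^ 2) (Set.Ioi R₀)
  Qu_L2 : IntegrableOn
    (fun r : ℝ => Real.exp (-4 * r) * ‖(((S.A ^ 2) (u r)) : H)‖ ^ 2) (Set.Ioi R₀)
  eqn : ∀ r ∈ Set.Ioi R₀, u'' r =
    ((S.V₁ r (u' r)) : H) + ((S.V₂ r (u r)) : H) + Real.exp (-2 * r) • ((S.Qr r (u r)) : H)

/-! The three integrands are dominated on `(r, ∞)`: the `Q`-term by the integrability of
`e^{-2t} ‖Q u(t)‖`; the `V₁`-term because `u'' ∈ L²` makes `u'` grow at most linearly, while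
`‖V₁(t)‖ = O(t^{-τ₁})` with `τ₁ > 2`; the `V₂`-term through `t^{-τ₂} ‖u‖ ≤ (t^{-2τ₂} + ‖u‖²) / 2`.
By the equation `u''` is then integrable on `(r, ∞)`, so `u'` has a limit `L` at infinity. If
`L ≠ 0`, the mean value inequality makes `‖u(t)‖` grow linearly, contradicting `u ∈ L²`. Hence
`-u'(r) = ∫_r^∞ u''`, and the equation splits this integral into the three terms. -/

open Topology

lemma continuousOn_apply_of_norm_le {R M F G : Type*} [Ring R] [AddCommGroup M] [Module R M]
    [NormedAddCommGroup F] [Module R F] [NormedAddCommGroup G] [Module R G]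
    {T : ℝ → M →ₗ[R] F} {B : M →ₗ[R] G} {v : ℝ → M} {s : Set ℝ} {c : ℝ}
    (hT : ∀ φ, ContinuousOn (fun t => T t φ) s) (hTB : ∀ t ∈ s, ∀ φ, ‖T t φ‖ ≤ c * ‖B φ‖)
    (hv : ContinuousOn (fun t => B (v t)) s) :
    ContinuousOn (fun t => T t (v t)) s := by
  intro t₀ ht₀
  have hsmall : Tendsto (fun t => T t (v t - v t₀)) (𝓝[s] t₀) (𝓝 0) := by
    refine squeeze_zero_norm' ?_
      (by simpa using (((hv t₀ ht₀).sub_const (B (v t₀))).norm.const_mul c))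
    filter_upwards [self_mem_nhdsWithin] with t ht
    simpa only [map_sub] using hTB t ht (v t - v t₀)
  have hsum := hsmall.add (hT (v t₀) t₀ ht₀)
  simp only [map_sub, sub_add_cancel, zero_add] at hsum
  exact hsum

lemma mul_rpow_neg_le_abs_mul_rpow_neg (C : ℝ) {R t τ : ℝ} (hR : 0 < R) (ht : R < t)
    (hτ : 0 ≤ τ) : C * t ^ (-τ) ≤ |C| * R ^ (-τ) :=
  (mul_le_mul_of_nonneg_right (le_abs_self C) (rpow_nonneg (hR.trans ht).le _)).trans
    (mul_le_mul_of_nonneg_left (rpow_le_rpow_of_nonpos hR ht.le (neg_nonpos.2 hτ))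
      (abs_nonneg C))

lemma integrableOn_Ioi_rpow_neg_mul_add {r τ : ℝ} (hr : 0 < r) (hτ : 2 < τ) (K : ℝ) :
    IntegrableOn (fun t => t ^ (-τ) * (K + t)) (Ioi r) := by
  have h₁ := (integrableOn_Ioi_rpow_of_lt (by linarith : -τ < -1) hr).const_mul K
  have h₂ := integrableOn_Ioi_rpow_of_lt (by linarith : -τ + 1 < -1) hr
  refine IntegrableOn.congr_fun (h₁.add h₂) (fun t (ht : r < t) => ?_) measurableSet_Ioi
  simp only [Pi.add_apply]
  rw [rpow_add_one (hr.trans ht).ne']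
  ring

lemma integrableOn_of_norm_le_mul {α E : Type*} [MeasurableSpace α] [NormedAddCommGroup E]
    {μ : Measure α} {g : α → E} {a b : α → ℝ} {s : Set α} (hs : MeasurableSet s)
    (hg : AEStronglyMeasurable g (μ.restrict s)) (ha : IntegrableOn (fun x => a x ^ 2) s μ)
    (hb : IntegrableOn (fun x => b x ^ 2) s μ) (hgab : ∀ x ∈ s, ‖g x‖ ≤ a x * b x) :
    IntegrableOn g s μ := by
  refine Integrable.mono' ((ha.add hb).div_const 2) hg ?_
  filter_upwards [ae_restrict_mem hs] with x hx
  simp only [Pi.add_apply]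
  nlinarith [hgab x hx, sq_nonneg (a x - b x)]

lemma not_integrableOn_Ioi_of_tendsto_atTop {g : ℝ → ℝ} (a : ℝ) (hg : Tendsto g atTop atTop) :
    ¬ IntegrableOn g (Ioi a) := by
  intro hint
  obtain ⟨T, hT⟩ := eventually_atTop.mp (hg.eventually_ge_atTop 1)
  have hone : IntegrableOn (fun _ => (1 : ℝ)) (Ioi (max a T)) := by
    refine (hint.mono_set (Ioi_subset_Ioi (le_max_left a T))).mono' aestronglyMeasurable_const ?_
    filter_upwards [ae_restrict_mem measurableSet_Ioi] with t ht
    simpa using hT t ((le_max_right a T).trans (le_of_lt ht))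
  simp at hone

section Calculus

variable {E : Type*} [NormedAddCommGroup E] [NormedSpace ℝ E]

lemma exists_norm_le_add_of_integrableOn_sq_deriv [CompleteSpace E] {f f' : ℝ → E} {r : ℝ}
    (hf : ∀ t ∈ Ici r, HasDerivAt f (f' t) t) (hf' : ContinuousOn f' (Ici r))
    (hint : IntegrableOn (fun t => ‖f' t‖ ^ 2) (Ici r)) :
    ∃ K, ∀ t ∈ Ici r, ‖f t‖ ≤ K + t := by
  refine ⟨‖f r‖ + (∫ t in Ici r, ‖f' t‖ ^ 2) - r, fun t (ht : r ≤ t) => ?_⟩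
  have hsub : uIcc r t ⊆ Ici r := by
    rw [uIcc_of_le ht]
    exact Icc_subset_Ici_self
  have hsq : ContinuousOn (fun s => ‖f' s‖ ^ 2) (uIcc r t) := (hf'.mono hsub).norm.pow 2
  have hftc : ∫ s in r..t, f' s = f t - f r :=
    intervalIntegral.integral_eq_sub_of_hasDerivAt (fun s hs => hf s (hsub hs))
      (hf'.mono hsub).intervalIntegrable
  have hmass : ∫ s in r..t, ‖f' s‖ ^ 2 ≤ ∫ s in Ici r, ‖f' s‖ ^ 2 := by
    rw [intervalIntegral.integral_of_le ht]
    exact setIntegral_mono_set hint (ae_of_all _ fun _ => by positivity)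
      (Ioc_subset_Ioi_self.trans Ioi_subset_Ici_self).eventuallyLE
  have hincr : ‖f t - f r‖ ≤ (t - r) + ∫ s in r..t, ‖f' s‖ ^ 2 :=
    calc ‖f t - f r‖ ≤ ∫ s in r..t, (1 + ‖f' s‖ ^ 2) := by
          rw [← hftc]
          refine intervalIntegral.norm_integral_le_of_norm_le ht (ae_of_all _ fun s _ => ?_)
            (continuousOn_const.add hsq).intervalIntegrable
          nlinarith [sq_nonneg (‖f' s‖ - 1)]
      _ = (t - r) + ∫ s in r..t, ‖f' s‖ ^ 2 := by
          rw [intervalIntegral.integral_add intervalIntegrable_const hsq.intervalIntegrable,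
            intervalIntegral.integral_const, smul_eq_mul, mul_one]
  linarith [norm_le_norm_add_norm_sub' (f t) (f r)]

lemma tendsto_norm_atTop_of_tendsto_deriv {f f' : ℝ → E} {a : ℝ} {L : E}
    (hf : ∀ t ∈ Ioi a, HasDerivAt f (f' t) t) (hlim : Tendsto f' atTop (𝓝 L)) (hL : L ≠ 0) :
    Tendsto (fun t => ‖f t‖) atTop atTop := by
  have hL' : 0 < ‖L‖ := norm_pos_iff.mpr hL
  obtain ⟨T, hT⟩ := eventually_atTop.mp ((eventually_gt_atTop a).and
    (hlim.eventually (Metric.closedBall_mem_nhds L (half_pos hL'))))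
  have hgrowth : ∀ t ≥ T, ‖L‖ / 2 * (t - T) - ‖f T‖ ≤ ‖f t‖ := by
    intro t ht
    have hmvt := norm_image_sub_le_of_norm_deriv_le_segment' (f := fun s => f s - s • L)
      (f' := fun s => f' s - L) (C := ‖L‖ / 2)
      (fun s hs => (((hf s (hT s hs.1).1).sub ((hasDerivAt_id s).smul_const L)).congr_deriv
        (by simp)).hasDerivWithinAt)
      (fun s hs => by simpa [dist_eq_norm] using (hT s hs.1).2) t ⟨ht, le_rfl⟩
    have hdecomp : (t - T) • L = (f t - f T) - ((f t - t • L) - (f T - T • L)) := by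
      rw [sub_smul]
      abel
    have hnorm := norm_sub_le (f t - f T) ((f t - t • L) - (f T - T • L))
    rw [← hdecomp, norm_smul, norm_of_nonneg (sub_nonneg.2 ht)] at hnorm
    nlinarith [norm_sub_le (f t) (f T)]
  refine tendsto_atTop_mono' _ (eventually_atTop.2 ⟨T, hgrowth⟩) ?_
  exact tendsto_atTop_add_const_right _ _
    ((tendsto_atTop_add_const_right _ _ tendsto_id).const_mul_atTop (half_pos hL'))

lemma eq_zero_of_tendsto_deriv_of_integrableOn_sq {f f' : ℝ → E} {a : ℝ} {L : E}
    (hf : ∀ t ∈ Ioi a, HasDerivAt f (f' t) t) (hlim : Tendsto f' atTop (𝓝 L))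
    (hint : IntegrableOn (fun t => ‖f t‖ ^ 2) (Ioi a)) : L = 0 := by
  by_contra hL
  exact not_integrableOn_Ioi_of_tendsto_atTop a
    ((tendsto_pow_atTop two_ne_zero).comp (tendsto_norm_atTop_of_tendsto_deriv hf hlim hL)) hint

lemma integral_Ioi_eq_neg_of_hasDerivAt_of_integrableOn_sq [CompleteSpace E]
    {f f' f'' : ℝ → E} {a r : ℝ} (hr : a < r)
    (hf : ∀ t ∈ Ioi a, HasDerivAt f (f' t) t) (hf' : ∀ t ∈ Ioi a, HasDerivAt f' (f'' t) t)
    (hint : IntegrableOn (fun t => ‖f t‖ ^ 2) (Ioi a)) (hf'' : IntegrableOn f'' (Ioi r)) :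
    ∫ t in Ioi r, f'' t = -f' r := by
  have hlim := tendsto_limUnder_of_hasDerivAt_of_integrableOn_Ioi
    (fun t ht => hf' t (hr.trans ht)) hf''
  rw [eq_zero_of_tendsto_deriv_of_integrableOn_sq hf hlim hint] at hlim
  rw [integral_Ioi_of_hasDerivAt_of_tendsto' (fun t ht => hf' t (hr.trans_le ht)) hf'' hlim,
    zero_sub]

end Calculus

namespace OpSetting

variable {H : Type*} [NormedAddCommGroup H] [InnerProductSpace ℂ H] [CompleteSpace H] {R₀ : ℝ}
  (S : OpSetting H R₀)

lemma exists_norm_Qr_le (hR₀ : 0 < R₀) :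
    ∃ c, ∀ t ∈ Ioi R₀, ∀ φ : S.D, ‖(S.Qr t φ : H)‖ ≤ c * ‖((S.A ^ 2) φ : H)‖ := by
  obtain ⟨C, hC⟩ := S.A0_graded 0
  refine ⟨|C| * R₀ ^ (-S.τ₀) + 1, fun t ht φ => ?_⟩
  have hdiff := (hC t ht φ).1
  simp only [pow_zero, Module.End.one_apply, zero_add] at hdiff
  have hdecay := mul_rpow_neg_le_abs_mul_rpow_neg C hR₀ ht S.τ₀_pos.le
  calc ‖(S.Qr t φ : H)‖ = ‖((S.Qr t - S.A ^ 2) φ : H) + ((S.A ^ 2) φ : H)‖ := by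
        rw [LinearMap.sub_apply, Submodule.coe_sub, sub_add_cancel]
    _ ≤ ‖((S.Qr t - S.A ^ 2) φ : H)‖ + ‖((S.A ^ 2) φ : H)‖ := norm_add_le _ _
    _ ≤ (|C| * R₀ ^ (-S.τ₀) + 1) * ‖((S.A ^ 2) φ : H)‖ := by
        nlinarith [norm_nonneg ((S.A ^ 2) φ : H)]

end OpSetting

namespace IsSolution

variable {H : Type*} [NormedAddCommGroup H] [InnerProductSpace ℂ H] [CompleteSpace H] {R₀ : ℝ}
  {S : OpSetting H R₀} {u u' : ℝ → S.D} {u'' : ℝ → H}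

lemma hasDerivAt_coe (hu : IsSolution S u u' u'') :
    ∀ t ∈ Ioi R₀, HasDerivAt (fun t => (u t : H)) (u' t : H) t := by
  simpa only [pow_zero, Module.End.one_apply] using hu.u_hasDeriv 0

lemma continuousOn_coe_deriv (hu : IsSolution S u u' u'') :
    ContinuousOn (fun t => (u' t : H)) (Ioi R₀) := by
  simpa only [pow_zero, Module.End.one_apply] using hu.u'_cont 0

lemma continuousOn_Qr_apply (hu : IsSolution S u u' u'') (hR₀ : 0 < R₀) :
    ContinuousOn (fun t => (S.Qr t (u t) : H)) (Ioi R₀) := by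
  obtain ⟨c, hc⟩ := S.exists_norm_Qr_le hR₀
  refine continuousOn_apply_of_norm_le (T := fun t => S.D.subtype ∘ₗ S.Qr t)
    (B := S.D.subtype ∘ₗ S.A ^ 2) (fun φ t ht => ?_) hc
    (fun t ht => (hu.u_hasDeriv 2 t ht).continuousAt.continuousWithinAt)
  have hderiv := S.Qr_hasDeriv 0 φ t ht
  simp only [pow_zero, Module.End.one_apply] at hderiv
  exact hderiv.continuousAt.continuousWithinAt

lemma continuousOn_V₁_apply (hu : IsSolution S u u' u'') (hR₀ : 0 < R₀) :
    ContinuousOn (fun t => (S.V₁ t (u' t) : H)) (Ioi R₀) := by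
  obtain ⟨C, hC⟩ := S.A1_bound
  refine continuousOn_apply_of_norm_le (T := fun t => S.D.subtype ∘ₗ S.V₁ t)
    (B := S.D.subtype) (c := |C| * R₀ ^ (-S.τ₁)) (fun φ t ht => ?_)
    (fun t ht φ => (hC t ht φ).1.trans (mul_le_mul_of_nonneg_right
      (mul_rpow_neg_le_abs_mul_rpow_neg C hR₀ ht S.τ₁_pos.le) (norm_nonneg _)))
    hu.continuousOn_coe_deriv
  have hderiv := S.V₁_hasDeriv 0 φ t ht
  simp only [pow_zero, Module.End.one_apply] at hderiv
  exact hderiv.continuousAt.continuousWithinAt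

lemma continuousOn_V₂_apply (hu : IsSolution S u u' u'') (hR₀ : 0 < R₀) :
    ContinuousOn (fun t => (S.V₂ t (u t) : H)) (Ioi R₀) := by
  obtain ⟨C, hC⟩ := S.A2_bound
  refine continuousOn_apply_of_norm_le (T := fun t => S.D.subtype ∘ₗ S.V₂ t)
    (B := S.D.subtype) (c := |C| * R₀ ^ (-S.τ₂))
    (fun φ => (by simpa only [pow_zero, Module.End.one_apply] using S.V₂_cont 0 φ :
      ContinuousOn (fun t => (S.V₂ t φ : H)) (Ioi R₀)))
    (fun t ht φ => (hC t ht φ).trans (mul_le_mul_of_nonneg_right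
      (mul_rpow_neg_le_abs_mul_rpow_neg C hR₀ ht S.τ₂_pos.le) (norm_nonneg _)))
    (fun t ht => (hu.hasDerivAt_coe t ht).continuousAt.continuousWithinAt)

lemma integrableOn_exp_smul_Qr_apply (hu : IsSolution S u u' u'') (hR₀ : 0 < R₀) {r : ℝ}
    (hr : R₀ < r)
    (hQu : IntegrableOn (fun t => exp (-2 * t) * ‖((S.A ^ 2) (u t) : H)‖) (Ioi r)) :
    IntegrableOn (fun t => exp (-2 * t) • (S.Qr t (u t) : H)) (Ioi r) := by
  obtain ⟨c, hc⟩ := S.exists_norm_Qr_le hR₀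
  have hsub : Ioi r ⊆ Ioi R₀ := Ioi_subset_Ioi hr.le
  refine (hQu.const_mul c).mono'
    ((((continuous_const.mul continuous_id).rexp.continuousOn).smul
      ((hu.continuousOn_Qr_apply hR₀).mono hsub)).aestronglyMeasurable measurableSet_Ioi) ?_
  filter_upwards [ae_restrict_mem measurableSet_Ioi] with t ht
  rw [norm_smul, norm_of_nonneg (exp_pos _).le, mul_left_comm]
  exact mul_le_mul_of_nonneg_left (hc t (hsub ht) (u t)) (exp_pos _).le

lemma integrableOn_V₁_apply (hu : IsSolution S u u' u'') (hR₀ : 0 < R₀) (hτ₁ : 2 < S.τ₁)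
    {r : ℝ} (hr : R₀ < r) :
    IntegrableOn (fun t => (S.V₁ t (u' t) : H)) (Ioi r) := by
  obtain ⟨C, hC⟩ := S.A1_bound
  have hsub : Ici r ⊆ Ioi R₀ := Ici_subset_Ioi.2 hr
  obtain ⟨K, hK⟩ := exists_norm_le_add_of_integrableOn_sq_deriv
    (fun t ht => hu.u'_hasDeriv t (hsub ht)) (hu.u''_cont.mono hsub) (hu.u''_L2.mono_set hsub)
  refine ((integrableOn_Ioi_rpow_neg_mul_add (hR₀.trans hr) hτ₁ K).const_mul |C|).mono'
    (((hu.continuousOn_V₁_apply hR₀).mono (Ioi_subset_Ici_self.trans hsub)).aestronglyMeasurable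
      measurableSet_Ioi) ?_
  filter_upwards [ae_restrict_mem measurableSet_Ioi] with t (ht : r < t)
  calc ‖(S.V₁ t (u' t) : H)‖ ≤ C * t ^ (-S.τ₁) * ‖(u' t : H)‖ := (hC t (hr.trans ht) _).1
    _ ≤ |C| * t ^ (-S.τ₁) * (K + t) :=
        mul_le_mul (mul_le_mul_of_nonneg_right (le_abs_self C)
          (rpow_nonneg (hR₀.trans (hr.trans ht)).le _)) (hK t ht.le) (norm_nonneg _)
          (mul_nonneg (abs_nonneg C) (rpow_nonneg (hR₀.trans (hr.trans ht)).le _))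
    _ = |C| * (t ^ (-S.τ₁) * (K + t)) := mul_assoc _ _ _

lemma integrableOn_V₂_apply (hu : IsSolution S u u' u'') (hR₀ : 0 < R₀) (hτ₂ : 1 / 2 < S.τ₂)
    {r : ℝ} (hr : R₀ < r) :
    IntegrableOn (fun t => (S.V₂ t (u t) : H)) (Ioi r) := by
  obtain ⟨C, hC⟩ := S.A2_bound
  have hsub : Ioi r ⊆ Ioi R₀ := Ioi_subset_Ioi hr.le
  have hdecay : IntegrableOn (fun t => (C * t ^ (-S.τ₂)) ^ 2) (Ioi r) := by
    refine IntegrableOn.congr_fun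
      ((integrableOn_Ioi_rpow_of_lt (by linarith : -S.τ₂ * 2 < -1) (hR₀.trans hr)).const_mul
        (C ^ 2)) (fun t (ht : r < t) => ?_) measurableSet_Ioi
    rw [mul_pow, ← rpow_mul_natCast (hR₀.trans (hr.trans ht)).le]
    norm_num
  exact integrableOn_of_norm_le_mul measurableSet_Ioi
    (((hu.continuousOn_V₂_apply hR₀).mono hsub).aestronglyMeasurable measurableSet_Ioi)
    hdecay (hu.u_L2.mono_set hsub) (fun t ht => hC t (hsub ht) (u t))

end IsSolution

theorem stmt_13_general {H : Type*} [NormedAddCommGroup H] [InnerProductSpace ℂ H] [CompleteSpace H]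
    (R₀ : ℝ) (hR₀ : 0 < R₀) (S : OpSetting H R₀)
    (hτ₁ : 2 < S.τ₁) (hτ₂ : 2 < S.τ₂)
    (u u' : ℝ → S.D) (u'' : ℝ → H) (hu : IsSolution S u u' u'')
    (hQu : ∀ r : ℝ, R₀ < r →
      IntegrableOn (fun t : ℝ =>
        Real.exp (-2 * t) * ‖(((S.A ^ 2) (u t)) : H)‖) (Set.Ioi r)) :
    ∀ r : ℝ, R₀ < r →
      IntegrableOn (fun t : ℝ => Real.exp (-2 * t) • ((S.Qr t (u t)) : H)) (Set.Ioi r) ∧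
      IntegrableOn (fun t : ℝ => ((S.V₁ t (u' t)) : H)) (Set.Ioi r) ∧
      IntegrableOn (fun t : ℝ => ((S.V₂ t (u t)) : H)) (Set.Ioi r) ∧
      -((u' r : H)) = (∫ t in Set.Ioi r, Real.exp (-2 * t) • ((S.Qr t (u t)) : H))
        + (∫ t in Set.Ioi r, ((S.V₁ t (u' t)) : H))
        + ∫ t in Set.Ioi r, ((S.V₂ t (u t)) : H) := by
  intro r hr
  have hQ := hu.integrableOn_exp_smul_Qr_apply hR₀ hr (hQu r hr)
  have hV₁ := hu.integrableOn_V₁_apply hR₀ hτ₁ hr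
  have hV₂ := hu.integrableOn_V₂_apply hR₀ (by linarith) hr
  have hsplit : EqOn u'' (fun t => (S.V₁ t (u' t) : H) + (S.V₂ t (u t) : H) +
      exp (-2 * t) • (S.Qr t (u t) : H)) (Ioi r) := fun t ht => hu.eqn t (hr.trans ht)
  have hV : IntegrableOn (fun t => (S.V₁ t (u' t) : H) + (S.V₂ t (u t) : H)) (Ioi r) :=
    hV₁.add hV₂
  have hu'' : IntegrableOn u'' (Ioi r) := (hV.add hQ).congr_fun hsplit.symm measurableSet_Ioi
  refine ⟨hQ, hV₁, hV₂, ?_⟩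
  rw [← integral_Ioi_eq_neg_of_hasDerivAt_of_integrableOn_sq hr hu.hasDerivAt_coe hu.u'_hasDeriv
    hu.u_L2 hu'', setIntegral_congr_fun measurableSet_Ioi hsplit,
    integral_add hV hQ, integral_add hV₁ hV₂]
  abel

theorem stmt_13 {H : Type*} [NormedAddCommGroup H] [InnerProductSpace ℂ H] [CompleteSpace H]
    [TopologicalSpace.SeparableSpace H]
    (R₀ : ℝ) (hR₀ : 0 < R₀) (S : OpSetting H R₀)
    (hτ₀ : 1 < S.τ₀) (hτ₁ : 2 < S.τ₁) (hτ₂ : 2 < S.τ₂)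
    (u u' : ℝ → S.D) (u'' : ℝ → H) (hu : IsSolution S u u' u'')
    (hQu : ∀ r : ℝ, R₀ < r →
      IntegrableOn (fun t : ℝ =>
        Real.exp (-2 * t) * ‖(((S.A ^ 2) (u t)) : H)‖) (Set.Ioi r)) :
    ∀ r : ℝ, R₀ < r →
      IntegrableOn (fun t : ℝ => Real.exp (-2 * t) • ((S.Qr t (u t)) : H)) (Set.Ioi r) ∧
      IntegrableOn (fun t : ℝ => ((S.V₁ t (u' t)) : H)) (Set.Ioi r) ∧
      IntegrableOn (fun t : ℝ => ((S.V₂ t (u t)) : H)) (Set.Ioi r) ∧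
      -((u' r : H)) = (∫ t in Set.Ioi r, Real.exp (-2 * t) • ((S.Qr t (u t)) : H))
        + (∫ t in Set.Ioi r, ((S.V₁ t (u' t)) : H))
        + ∫ t in Set.Ioi r, ((S.V₂ t (u t)) : H) :=
  stmt_13_general R₀ hR₀ S hτ₁ hτ₂ u u' u'' hu hQu
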